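/- The Ricci tensor of the Vaidya metric is Riemann-compatible: for all indices, Σ_{cyclic in (i,j,k)} g^{pq} S_{ip} R_{qljk} = 0, i.e., R(𝒮X₁, X, X₂, X₃) + R(𝒮X₂, X, X₃, X₁) + R(𝒮X₃, X, X₁, X₂) = 0 where 𝒮 is the Ricci operator. -/

import Mathlib

noncomputable section

open Real

/-- Partial derivative of a scalar function on `ℝ⁴` in the `i`-th coordinate direction. -/
def pd (i : Fin 4) (f : (Fin 4 → ℝ) → ℝ) (x : Fin 4 → ℝ) : ℝ :=
  fderiv ℝ f x (Pi.single i 1)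

/-- The Vaidya metric components in `(u,r,θ,φ)`-coordinates. -/
def gV (m : ℝ → ℝ) (x : Fin 4 → ℝ) (i j : Fin 4) : ℝ :=
  if i = 0 ∧ j = 0 then -1 + 2 * m (x 0) / x 1
  else if (i = 0 ∧ j = 1) ∨ (i = 1 ∧ j = 0) then -1
  else if i = 2 ∧ j = 2 then (x 1) ^ 2
  else if i = 3 ∧ j = 3 then (x 1) ^ 2 * Real.sin (x 2) ^ 2
  else 0

/-- The inverse Vaidya metric components. -/
def gVinv (m : ℝ → ℝ) (x : Fin 4 → ℝ) (i j : Fin 4) : ℝ :=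
  if (i = 0 ∧ j = 1) ∨ (i = 1 ∧ j = 0) then -1
  else if i = 1 ∧ j = 1 then 1 - 2 * m (x 0) / x 1
  else if i = 2 ∧ j = 2 then 1 / (x 1) ^ 2
  else if i = 3 ∧ j = 3 then 1 / ((x 1) ^ 2 * Real.sin (x 2) ^ 2)
  else 0

/-- Christoffel symbols `Γ^k_{ij}` of the Levi-Civita connection of the Vaidya metric. -/
def Chr (m : ℝ → ℝ) (x : Fin 4 → ℝ) (k i j : Fin 4) : ℝ :=
  (1 / 2) * ∑ l, gVinv m x k l *
    (pd i (fun y => gV m y l j) x + pd j (fun y => gV m y l i) x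
      - pd l (fun y => gV m y i j) x)

/-- Riemann–Christoffel curvature tensor `R_{ijkl}` (0,4-form),
`R_{ijkl} = g_{lp}(∂_i Γ^p_{jk} - ∂_j Γ^p_{ik} + Γ^p_{iq}Γ^q_{jk} - Γ^p_{jq}Γ^q_{ik})`. -/
def Riem (m : ℝ → ℝ) (x : Fin 4 → ℝ) (i j k l : Fin 4) : ℝ :=
  ∑ p, gV m x l p *
    (pd i (fun y => Chr m y p j k) x - pd j (fun y => Chr m y p i k) x
      + ∑ q, (Chr m x p i q * Chr m x q j k - Chr m x p j q * Chr m x q i k))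

/-- Ricci tensor `S_{ij} = ∂_k Γ^k_{ij} - ∂_i Γ^k_{kj} + Γ^k_{kl}Γ^l_{ij} - Γ^k_{il}Γ^l_{kj}`. -/
def Ric (m : ℝ → ℝ) (x : Fin 4 → ℝ) (i j : Fin 4) : ℝ :=
  ∑ k, (pd k (fun y => Chr m y k i j) x - pd i (fun y => Chr m y k k j) x
    + ∑ l, (Chr m x k k l * Chr m x l i j - Chr m x k i l * Chr m x l k j))

/-- Scalar curvature `κ = g^{ij} S_{ij}`. -/
def Scal (m : ℝ → ℝ) (x : Fin 4 → ℝ) : ℝ :=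
  ∑ i, ∑ j, gVinv m x i j * Ric m x i j

/-- Kulkarni–Nomizu product of two symmetric (0,2)-tensors. -/
def KN (A E : Fin 4 → Fin 4 → ℝ) (i j k l : Fin 4) : ℝ :=
  A i l * E j k + A j k * E i l - A i k * E j l - A j l * E i k

/-- Conharmonic curvature tensor `K = R - (1/(n-2)) g∧S`, `n = 4`. -/
def Conh (m : ℝ → ℝ) (x : Fin 4 → ℝ) (i j k l : Fin 4) : ℝ :=
  Riem m x i j k l - (1 / 2) * KN (gV m x) (Ric m x) i j k l

/-- Weyl conformal curvature tensor `C = K + κ/((n-1)(n-2)) · 𝔊`, `𝔊 = (1/2) g∧g`, `n = 4`. -/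
def Weyl (m : ℝ → ℝ) (x : Fin 4 → ℝ) (i j k l : Fin 4) : ℝ :=
  Conh m x i j k l + Scal m x / 6 * ((1 / 2) * KN (gV m x) (gV m x) i j k l)

/-- Concircular curvature tensor `W = R - κ/(n(n-1)) · 𝔊`, `n = 4`. -/
def Conc (m : ℝ → ℝ) (x : Fin 4 → ℝ) (i j k l : Fin 4) : ℝ :=
  Riem m x i j k l - Scal m x / 12 * ((1 / 2) * KN (gV m x) (gV m x) i j k l)

/-- Projective curvature tensor `P = R - (1/(n-1)) ∧_S`, `n = 4`. -/
def Proj (m : ℝ → ℝ) (x : Fin 4 → ℝ) (i j k l : Fin 4) : ℝ :=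
  Riem m x i j k l - (1 / 3) * (Ric m x j k * gV m x i l - Ric m x i k * gV m x j l)

/-- Components of the endomorphism `𝒟(X,Y)` associated with a (0,4)-tensor `D`:
`(𝒟_{ab})^p_q = g^{ps} D_{abqs}`. -/
def endo (m : ℝ → ℝ) (x : Fin 4 → ℝ) (D : Fin 4 → Fin 4 → Fin 4 → Fin 4 → ℝ)
    (a b p q : Fin 4) : ℝ :=
  ∑ s, gVinv m x p s * D a b q s

/-- The (0,6)-tensor `D·H` obtained by the action of the curvature operator of `D` on
a (0,4)-tensor `H`. -/
def tdot (m : ℝ → ℝ) (x : Fin 4 → ℝ)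
    (D H : Fin 4 → Fin 4 → Fin 4 → Fin 4 → ℝ) (i j k l a b : Fin 4) : ℝ :=
  -(∑ p, (endo m x D a b p i * H p j k l + endo m x D a b p j * H i p k l
      + endo m x D a b p k * H i j p l + endo m x D a b p l * H i j k p))

/-- Tachibana tensor `Q(A,H)` of a symmetric (0,2)-tensor `A` and a (0,4)-tensor `H`. -/
def Tach (A : Fin 4 → Fin 4 → ℝ) (H : Fin 4 → Fin 4 → Fin 4 → Fin 4 → ℝ)
    (i j k l a b : Fin 4) : ℝ :=
  A a i * H b j k l + A a j * H i b k l + A a k * H i j b l + A a l * H i j k b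
    - (A b i * H a j k l + A b j * H i a k l + A b k * H i j a l + A b l * H i j k a)

/-- Covariant derivative `T_{ij,k}` of a (0,2)-tensor field, derivative index first. -/
def covS (m : ℝ → ℝ) (x : Fin 4 → ℝ) (T : (Fin 4 → ℝ) → Fin 4 → Fin 4 → ℝ)
    (k i j : Fin 4) : ℝ :=
  pd k (fun y => T y i j) x - ∑ l, Chr m x l k i * T x l j - ∑ l, Chr m x l k j * T x i l

/-- Covariant derivative `D_{ijkl,p}` of a (0,4)-tensor field, derivative index first. -/
def covR (m : ℝ → ℝ) (x : Fin 4 → ℝ)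
    (D : (Fin 4 → ℝ) → Fin 4 → Fin 4 → Fin 4 → Fin 4 → ℝ) (p i j k l : Fin 4) : ℝ :=
  pd p (fun y => D y i j k l) x
    - ∑ q, Chr m x q p i * D x q j k l - ∑ q, Chr m x q p j * D x i q k l
    - ∑ q, Chr m x q p k * D x i j q l - ∑ q, Chr m x q p l * D x i j k q

/-- The symmetry orbit of an index quadruple under the standard symmetries
`D_{ijkl} = -D_{jikl} = -D_{ijlk} = D_{klij}` of a generalized curvature tensor. -/
def orb (t : Fin 4 × Fin 4 × Fin 4 × Fin 4) : Set (Fin 4 × Fin 4 × Fin 4 × Fin 4) :=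
  {(t.1, t.2.1, t.2.2.1, t.2.2.2), (t.2.1, t.1, t.2.2.1, t.2.2.2),
   (t.1, t.2.1, t.2.2.2, t.2.2.1), (t.2.1, t.1, t.2.2.2, t.2.2.1),
   (t.2.2.1, t.2.2.2, t.1, t.2.1), (t.2.2.2, t.2.2.1, t.1, t.2.1),
   (t.2.2.1, t.2.2.2, t.2.1, t.1), (t.2.2.2, t.2.2.1, t.2.1, t.1)}

/-- Energy–momentum tensor of the Vaidya metric via Einstein's field equations. -/
def EMT (c G : ℝ) (m : ℝ → ℝ) (y : Fin 4 → ℝ) (i j : Fin 4) : ℝ :=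
  c ^ 4 / (8 * π * G) * (Ric m y i j - Scal m y / 2 * gV m y i j)


def pr (i : Fin 4) : (Fin 4 → ℝ) →L[ℝ] ℝ := ContinuousLinearMap.proj i

lemma hasF_coord (i : Fin 4) (x : Fin 4 → ℝ) :
    HasFDerivAt (fun y : Fin 4 → ℝ => y i) (pr i) x :=
  (ContinuousLinearMap.proj (R := ℝ) (φ := fun _ : Fin 4 => ℝ) i).hasFDerivAt

lemma pr_single (i a : Fin 4) : pr i (Pi.single a (1:ℝ)) = if i = a then 1 else 0 := by
  simp [pr, Pi.single_apply]

lemma pd_clean {x : Fin 4 → ℝ} {f : (Fin 4 → ℝ) → ℝ} {c0 c1 c2 : ℝ}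
    (H : HasFDerivAt f (c0 • pr 0 + c1 • pr 1 + c2 • pr 2) x) (a : Fin 4) :
    pd a f x = if a = 0 then c0 else if a = 1 then c1 else if a = 2 then c2 else 0 := by
  rw [pd, H.fderiv]
  simp only [ContinuousLinearMap.add_apply, ContinuousLinearMap.coe_smul', Pi.smul_apply,
    pr_single, smul_eq_mul]
  fin_cases a <;> norm_num [Fin.ext_iff]

variable {m : ℝ → ℝ} {x : Fin 4 → ℝ}

lemma diff_m (hm : ContDiff ℝ (⊤ : ℕ∞) m) : Differentiable ℝ m :=
  (hm.of_le (by simp) : ContDiff ℝ (⊤:ℕ∞) m).differentiable (by simp)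

lemma diff_dm (hm : ContDiff ℝ (⊤ : ℕ∞) m) : Differentiable ℝ (deriv m) := by
  have h1 : ContDiff ℝ (⊤ : ℕ∞) m := hm.of_le (by simp)
  exact (contDiff_infty_iff_deriv.mp h1).2.differentiable (by simp)

lemma hM (hm : ContDiff ℝ (⊤ : ℕ∞) m) :
    HasFDerivAt (fun y : Fin 4 → ℝ => m (y 0)) (deriv m (x 0) • pr 0) x :=
  HasDerivAt.comp_hasFDerivAt x ((diff_m hm) (x 0)).hasDerivAt (hasF_coord 0 x)

lemma hDM (hm : ContDiff ℝ (⊤ : ℕ∞) m) :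
    HasFDerivAt (fun y : Fin 4 → ℝ => deriv m (y 0)) (deriv (deriv m) (x 0) • pr 0) x :=
  by have h := HasDerivAt.comp_hasFDerivAt x ((diff_dm hm) (x 0)).hasDerivAt (hasF_coord 0 x); exact h

lemma hRinv (hx : x 1 ≠ 0) :
    HasFDerivAt (fun y : Fin 4 → ℝ => (y 1)⁻¹) ((-((x 1)^2)⁻¹) • pr 1) x := by
  have h := (hasDerivAt_inv hx).comp_hasFDerivAt x (hasF_coord 1 x)
  exact h

lemma hSin : HasFDerivAt (fun y : Fin 4 → ℝ => Real.sin (y 2)) (Real.cos (x 2) • pr 2) x :=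
  by have h := HasDerivAt.comp_hasFDerivAt x (Real.hasDerivAt_sin (x 2)) (hasF_coord 2 x); exact h

lemma hCos : HasFDerivAt (fun y : Fin 4 → ℝ => Real.cos (y 2)) ((-Real.sin (x 2)) • pr 2) x :=
  by have h := HasDerivAt.comp_hasFDerivAt x (Real.hasDerivAt_cos (x 2)) (hasF_coord 2 x); exact h

lemma hSinInv (hs : Real.sin (x 2) ≠ 0) :
    HasFDerivAt (fun y : Fin 4 → ℝ => (Real.sin (y 2))⁻¹)
      ((-Real.cos (x 2) / (Real.sin (x 2))^2) • pr 2) x := by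
  have h := ((Real.hasDerivAt_sin (x 2)).inv hs).comp_hasFDerivAt x (hasF_coord 2 x)
  exact h

lemma pd_const (a : Fin 4) (c : ℝ) : pd a (fun _ : Fin 4 → ℝ => c) x = 0 := by
  rw [pd, fderiv_fun_const]
  simp


lemma pd_c000 (hm : ContDiff ℝ (⊤ : ℕ∞) m) (hx : x 1 ≠ 0) (a : Fin 4) :
    pd a (fun y : Fin 4 → ℝ => -(m (y 0) * ((y 1)⁻¹ * (y 1)⁻¹))) x =
      if a = 0 then -(deriv m (x 0) / (x 1)^2) else if a = 1 then 2 * m (x 0) / (x 1)^3 else if a = 2 then 0 else 0 := by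
  have H : HasFDerivAt (fun y : Fin 4 → ℝ => -(m (y 0) * ((y 1)⁻¹ * (y 1)⁻¹)))
      (((-(deriv m (x 0) / (x 1)^2) : ℝ)) • pr 0 + ((2 * m (x 0) / (x 1)^3 : ℝ)) • pr 1 + ((0 : ℝ)) • pr 2) x := by
    have H0 := (((hM hm).mul ((hRinv hx).mul (hRinv hx))).neg)
    refine H0.congr_fderiv ?_
    refine ContinuousLinearMap.ext fun v => ?_
    simp [pr]
    try field_simp
    try ring
  exact pd_clean H a

lemma pd_c022 (a : Fin 4) :
    pd a (fun y : Fin 4 → ℝ => y 1) x =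
      if a = 0 then 0 else if a = 1 then 1 else if a = 2 then 0 else 0 := by
  have H : HasFDerivAt (fun y : Fin 4 → ℝ => y 1)
      (((0 : ℝ)) • pr 0 + ((1 : ℝ)) • pr 1 + ((0 : ℝ)) • pr 2) x := by
    have H0 := (hasF_coord 1 x)
    refine H0.congr_fderiv ?_
    refine ContinuousLinearMap.ext fun v => ?_
    simp [pr]
    try field_simp
    try ring
  exact pd_clean H a

lemma pd_c033 (a : Fin 4) :
    pd a (fun y : Fin 4 → ℝ => y 1 * (Real.sin (y 2) * Real.sin (y 2))) x =
      if a = 0 then 0 else if a = 1 then Real.sin (x 2)^2 else if a = 2 then 2 * x 1 * Real.sin (x 2) * Real.cos (x 2) else 0 := by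
  have H : HasFDerivAt (fun y : Fin 4 → ℝ => y 1 * (Real.sin (y 2) * Real.sin (y 2)))
      (((0 : ℝ)) • pr 0 + ((Real.sin (x 2)^2 : ℝ)) • pr 1 + ((2 * x 1 * Real.sin (x 2) * Real.cos (x 2) : ℝ)) • pr 2) x := by
    have H0 := ((hasF_coord 1 x).mul (hSin.mul hSin))
    refine H0.congr_fderiv ?_
    refine ContinuousLinearMap.ext fun v => ?_
    simp [pr]
    try field_simp
    try ring
  exact pd_clean H a

lemma pd_c100 (hm : ContDiff ℝ (⊤ : ℕ∞) m) (hx : x 1 ≠ 0) (a : Fin 4) :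
    pd a (fun y : Fin 4 → ℝ => -(deriv m (y 0) * (y 1)⁻¹) + m (y 0) * ((y 1)⁻¹ * (y 1)⁻¹) - 2 * (m (y 0) * m (y 0)) * ((y 1)⁻¹ * ((y 1)⁻¹ * (y 1)⁻¹))) x =
      if a = 0 then -(deriv (deriv m) (x 0) / x 1) + deriv m (x 0) / (x 1)^2 - 4 * m (x 0) * deriv m (x 0) / (x 1)^3 else if a = 1 then deriv m (x 0) / (x 1)^2 - 2 * m (x 0) / (x 1)^3 + 6 * m (x 0)^2 / (x 1)^4 else if a = 2 then 0 else 0 := by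
  have H : HasFDerivAt (fun y : Fin 4 → ℝ => -(deriv m (y 0) * (y 1)⁻¹) + m (y 0) * ((y 1)⁻¹ * (y 1)⁻¹) - 2 * (m (y 0) * m (y 0)) * ((y 1)⁻¹ * ((y 1)⁻¹ * (y 1)⁻¹)))
      (((-(deriv (deriv m) (x 0) / x 1) + deriv m (x 0) / (x 1)^2 - 4 * m (x 0) * deriv m (x 0) / (x 1)^3 : ℝ)) • pr 0 + ((deriv m (x 0) / (x 1)^2 - 2 * m (x 0) / (x 1)^3 + 6 * m (x 0)^2 / (x 1)^4 : ℝ)) • pr 1 + ((0 : ℝ)) • pr 2) x := by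
    have H0 := ((((hDM hm).mul (hRinv hx)).neg.add ((hM hm).mul ((hRinv hx).mul (hRinv hx)))).sub ((((hM hm).mul (hM hm)).const_mul (2:ℝ)).mul ((hRinv hx).mul ((hRinv hx).mul (hRinv hx)))))
    refine H0.congr_fderiv ?_
    refine ContinuousLinearMap.ext fun v => ?_
    simp [pr]
    try field_simp
    try ring
  exact pd_clean H a

lemma pd_c101 (hm : ContDiff ℝ (⊤ : ℕ∞) m) (hx : x 1 ≠ 0) (a : Fin 4) :
    pd a (fun y : Fin 4 → ℝ => m (y 0) * ((y 1)⁻¹ * (y 1)⁻¹)) x =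
      if a = 0 then deriv m (x 0) / (x 1)^2 else if a = 1 then -(2 * m (x 0) / (x 1)^3) else if a = 2 then 0 else 0 := by
  have H : HasFDerivAt (fun y : Fin 4 → ℝ => m (y 0) * ((y 1)⁻¹ * (y 1)⁻¹))
      (((deriv m (x 0) / (x 1)^2 : ℝ)) • pr 0 + ((-(2 * m (x 0) / (x 1)^3) : ℝ)) • pr 1 + ((0 : ℝ)) • pr 2) x := by
    have H0 := ((hM hm).mul ((hRinv hx).mul (hRinv hx)))
    refine H0.congr_fderiv ?_
    refine ContinuousLinearMap.ext fun v => ?_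
    simp [pr]
    try field_simp
    try ring
  exact pd_clean H a

lemma pd_c122 (hm : ContDiff ℝ (⊤ : ℕ∞) m) (a : Fin 4) :
    pd a (fun y : Fin 4 → ℝ => 2 * m (y 0) - y 1) x =
      if a = 0 then 2 * deriv m (x 0) else if a = 1 then -1 else if a = 2 then 0 else 0 := by
  have H : HasFDerivAt (fun y : Fin 4 → ℝ => 2 * m (y 0) - y 1)
      (((2 * deriv m (x 0) : ℝ)) • pr 0 + ((-1 : ℝ)) • pr 1 + ((0 : ℝ)) • pr 2) x := by
    have H0 := (((hM hm).const_mul (2:ℝ)).sub (hasF_coord 1 x))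
    refine H0.congr_fderiv ?_
    refine ContinuousLinearMap.ext fun v => ?_
    simp [pr]
    try field_simp
    try ring
  exact pd_clean H a

lemma pd_c133 (hm : ContDiff ℝ (⊤ : ℕ∞) m) (a : Fin 4) :
    pd a (fun y : Fin 4 → ℝ => (2 * m (y 0) - y 1) * (Real.sin (y 2) * Real.sin (y 2))) x =
      if a = 0 then 2 * deriv m (x 0) * Real.sin (x 2)^2 else if a = 1 then -(Real.sin (x 2)^2) else if a = 2 then 2 * (2 * m (x 0) - x 1) * Real.sin (x 2) * Real.cos (x 2) else 0 := by
  have H : HasFDerivAt (fun y : Fin 4 → ℝ => (2 * m (y 0) - y 1) * (Real.sin (y 2) * Real.sin (y 2)))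
      (((2 * deriv m (x 0) * Real.sin (x 2)^2 : ℝ)) • pr 0 + ((-(Real.sin (x 2)^2) : ℝ)) • pr 1 + ((2 * (2 * m (x 0) - x 1) * Real.sin (x 2) * Real.cos (x 2) : ℝ)) • pr 2) x := by
    have H0 := ((((hM hm).const_mul (2:ℝ)).sub (hasF_coord 1 x)).mul (hSin.mul hSin))
    refine H0.congr_fderiv ?_
    refine ContinuousLinearMap.ext fun v => ?_
    simp [pr]
    try field_simp
    try ring
  exact pd_clean H a

lemma pd_c212 (hx : x 1 ≠ 0) (a : Fin 4) :
    pd a (fun y : Fin 4 → ℝ => (y 1)⁻¹) x =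
      if a = 0 then 0 else if a = 1 then -(1 / (x 1)^2) else if a = 2 then 0 else 0 := by
  have H : HasFDerivAt (fun y : Fin 4 → ℝ => (y 1)⁻¹)
      (((0 : ℝ)) • pr 0 + ((-(1 / (x 1)^2) : ℝ)) • pr 1 + ((0 : ℝ)) • pr 2) x := by
    have H0 := (hRinv hx)
    refine H0.congr_fderiv ?_
    refine ContinuousLinearMap.ext fun v => ?_
    simp [pr]
    try field_simp
    try ring
  exact pd_clean H a

lemma pd_c233 (a : Fin 4) :
    pd a (fun y : Fin 4 → ℝ => -(Real.sin (y 2) * Real.cos (y 2))) x =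
      if a = 0 then 0 else if a = 1 then 0 else if a = 2 then Real.sin (x 2)^2 - Real.cos (x 2)^2 else 0 := by
  have H : HasFDerivAt (fun y : Fin 4 → ℝ => -(Real.sin (y 2) * Real.cos (y 2)))
      (((0 : ℝ)) • pr 0 + ((0 : ℝ)) • pr 1 + ((Real.sin (x 2)^2 - Real.cos (x 2)^2 : ℝ)) • pr 2) x := by
    have H0 := (((hSin (x := x)).mul (hCos (x := x))).neg)
    refine H0.congr_fderiv ?_
    refine ContinuousLinearMap.ext fun v => ?_
    simp [pr]
    try field_simp
    try ring
  exact pd_clean H a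

lemma pd_c323 (hs : Real.sin (x 2) ≠ 0) (a : Fin 4) :
    pd a (fun y : Fin 4 → ℝ => Real.cos (y 2) * (Real.sin (y 2))⁻¹) x =
      if a = 0 then 0 else if a = 1 then 0 else if a = 2 then -(1 / Real.sin (x 2)^2) else 0 := by
  have H : HasFDerivAt (fun y : Fin 4 → ℝ => Real.cos (y 2) * (Real.sin (y 2))⁻¹)
      (((0 : ℝ)) • pr 0 + ((0 : ℝ)) • pr 1 + ((-(1 / Real.sin (x 2)^2) : ℝ)) • pr 2) x := by
    have H0 := (hCos.mul (hSinInv hs))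
    refine H0.congr_fderiv ?_
    refine ContinuousLinearMap.ext fun v => ?_
    simp [pr]
    field_simp
    linear_combination (-(v 2)) * Real.sin_sq_add_cos_sq (x 2)
  exact pd_clean H a


/-! ### pd of metric components -/

lemma pd_g00 (hm : ContDiff ℝ (⊤ : ℕ∞) m) (hx : x 1 ≠ 0) (a : Fin 4) :
    pd a (fun y : Fin 4 → ℝ => -1 + 2 * m (y 0) / y 1) x =
      if a = 0 then 2 * deriv m (x 0) / x 1
      else if a = 1 then -(2 * m (x 0)) / (x 1)^2 else if a = 2 then 0 else 0 := by
  have h : (fun y : Fin 4 → ℝ => -1 + 2 * m (y 0) / y 1)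
      = fun y : Fin 4 → ℝ => -1 + 2 * (m (y 0) * (y 1)⁻¹) := funext fun y => by ring
  rw [h]
  have H : HasFDerivAt (fun y : Fin 4 → ℝ => -1 + 2 * (m (y 0) * (y 1)⁻¹))
      ((2 * deriv m (x 0) / x 1) • pr 0 + (-(2 * m (x 0)) / (x 1)^2) • pr 1 + (0:ℝ) • pr 2) x := by
    have H0 := (((hM hm).mul (hRinv hx)).const_mul (2:ℝ)).const_add (-1:ℝ)
    refine H0.congr_fderiv ?_
    refine ContinuousLinearMap.ext fun v => ?_
    simp [pr]
    field_simp
    ring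
  exact pd_clean H a

lemma pd_g22 (a : Fin 4) :
    pd a (fun y : Fin 4 → ℝ => (y 1)^2) x =
      if a = 0 then 0 else if a = 1 then 2 * x 1 else if a = 2 then 0 else 0 := by
  have h : (fun y : Fin 4 → ℝ => (y 1)^2) = fun y : Fin 4 → ℝ => y 1 * y 1 :=
    funext fun y => by ring
  rw [h]
  have H : HasFDerivAt (fun y : Fin 4 → ℝ => y 1 * y 1)
      ((0:ℝ) • pr 0 + (2 * x 1) • pr 1 + (0:ℝ) • pr 2) x := by
    have H0 := (hasF_coord 1 x).mul (hasF_coord 1 x)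
    refine H0.congr_fderiv ?_
    refine ContinuousLinearMap.ext fun v => ?_
    simp [pr]
    ring
  exact pd_clean H a

lemma pd_g33 (a : Fin 4) :
    pd a (fun y : Fin 4 → ℝ => (y 1)^2 * Real.sin (y 2)^2) x =
      if a = 0 then 0 else if a = 1 then 2 * x 1 * Real.sin (x 2)^2
      else if a = 2 then 2 * (x 1)^2 * Real.sin (x 2) * Real.cos (x 2) else 0 := by
  have h : (fun y : Fin 4 → ℝ => (y 1)^2 * Real.sin (y 2)^2)
      = fun y : Fin 4 → ℝ => (y 1 * y 1) * (Real.sin (y 2) * Real.sin (y 2)) :=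
    funext fun y => by ring
  rw [h]
  have H : HasFDerivAt (fun y : Fin 4 → ℝ => (y 1 * y 1) * (Real.sin (y 2) * Real.sin (y 2)))
      ((0:ℝ) • pr 0 + (2 * x 1 * Real.sin (x 2)^2) • pr 1
        + (2 * (x 1)^2 * Real.sin (x 2) * Real.cos (x 2)) • pr 2) x := by
    have H0 := ((hasF_coord 1 x).mul (hasF_coord 1 x)).mul (hSin.mul hSin)
    refine H0.congr_fderiv ?_
    refine ContinuousLinearMap.ext fun v => ?_
    simp [pr]
    ring
  exact pd_clean H a


/-! ### Closed forms -/

def chrF (m : ℝ → ℝ) (y : Fin 4 → ℝ) (k i j : Fin 4) : ℝ :=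
  if k = 0 ∧ i = 0 ∧ j = 0 then -(m (y 0) * ((y 1)⁻¹ * (y 1)⁻¹))
  else if k = 0 ∧ i = 2 ∧ j = 2 then y 1
  else if k = 0 ∧ i = 3 ∧ j = 3 then y 1 * (Real.sin (y 2) * Real.sin (y 2))
  else if k = 1 ∧ i = 0 ∧ j = 0 then
    -(deriv m (y 0) * (y 1)⁻¹) + m (y 0) * ((y 1)⁻¹ * (y 1)⁻¹)
      - 2 * (m (y 0) * m (y 0)) * ((y 1)⁻¹ * ((y 1)⁻¹ * (y 1)⁻¹))
  else if k = 1 ∧ ((i = 0 ∧ j = 1) ∨ (i = 1 ∧ j = 0)) then m (y 0) * ((y 1)⁻¹ * (y 1)⁻¹)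
  else if k = 1 ∧ i = 2 ∧ j = 2 then 2 * m (y 0) - y 1
  else if k = 1 ∧ i = 3 ∧ j = 3 then (2 * m (y 0) - y 1) * (Real.sin (y 2) * Real.sin (y 2))
  else if k = 2 ∧ ((i = 1 ∧ j = 2) ∨ (i = 2 ∧ j = 1)) then (y 1)⁻¹
  else if k = 2 ∧ i = 3 ∧ j = 3 then -(Real.sin (y 2) * Real.cos (y 2))
  else if k = 3 ∧ ((i = 1 ∧ j = 3) ∨ (i = 3 ∧ j = 1)) then (y 1)⁻¹
  else if k = 3 ∧ ((i = 2 ∧ j = 3) ∨ (i = 3 ∧ j = 2)) then Real.cos (y 2) * (Real.sin (y 2))⁻¹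
  else 0

def dgV (m : ℝ → ℝ) (x : Fin 4 → ℝ) (a l j : Fin 4) : ℝ :=
  if l = 0 ∧ j = 0 then
    (if a = 0 then 2 * deriv m (x 0) / x 1
     else if a = 1 then -(2 * m (x 0)) / (x 1)^2 else if a = 2 then 0 else 0)
  else if l = 2 ∧ j = 2 then
    (if a = 0 then 0 else if a = 1 then 2 * x 1 else if a = 2 then 0 else 0)
  else if l = 3 ∧ j = 3 then
    (if a = 0 then 0 else if a = 1 then 2 * x 1 * Real.sin (x 2)^2
     else if a = 2 then 2 * (x 1)^2 * Real.sin (x 2) * Real.cos (x 2) else 0)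
  else 0

lemma pd_gV (hm : ContDiff ℝ (⊤ : ℕ∞) m) (hx : x 1 ≠ 0) (a l j : Fin 4) :
    pd a (fun y => gV m y l j) x = dgV m x a l j := by
  fin_cases l <;> fin_cases j <;>
    simp [gV, dgV, pd_g00 hm hx, pd_g22, pd_g33, pd_const]

set_option maxHeartbeats 4000000 in
lemma chr_eq (hm : ContDiff ℝ (⊤ : ℕ∞) m) (hx : x 1 ≠ 0) (hs : Real.sin (x 2) ≠ 0) (k i j : Fin 4) :
    Chr m x k i j = chrF m x k i j := by
  unfold Chr
  simp only [Fin.sum_univ_four, pd_gV hm hx]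
  fin_cases k <;> fin_cases i <;> fin_cases j <;>
    simp [gVinv, dgV, chrF] <;> field_simp <;> ring


def dchrF (m : ℝ → ℝ) (x : Fin 4 → ℝ) (a k i j : Fin 4) : ℝ :=
  if k = 0 ∧ i = 0 ∧ j = 0 then
    (if a = 0 then -(deriv m (x 0) / (x 1)^2) else if a = 1 then 2 * m (x 0) / (x 1)^3
     else if a = 2 then 0 else 0)
  else if k = 0 ∧ i = 2 ∧ j = 2 then
    (if a = 0 then 0 else if a = 1 then 1 else if a = 2 then 0 else 0)
  else if k = 0 ∧ i = 3 ∧ j = 3 then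
    (if a = 0 then 0 else if a = 1 then Real.sin (x 2)^2
     else if a = 2 then 2 * x 1 * Real.sin (x 2) * Real.cos (x 2) else 0)
  else if k = 1 ∧ i = 0 ∧ j = 0 then
    (if a = 0 then -(deriv (deriv m) (x 0) / x 1) + deriv m (x 0) / (x 1)^2
        - 4 * m (x 0) * deriv m (x 0) / (x 1)^3
     else if a = 1 then deriv m (x 0) / (x 1)^2 - 2 * m (x 0) / (x 1)^3 + 6 * m (x 0)^2 / (x 1)^4
     else if a = 2 then 0 else 0)
  else if k = 1 ∧ ((i = 0 ∧ j = 1) ∨ (i = 1 ∧ j = 0)) then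
    (if a = 0 then deriv m (x 0) / (x 1)^2 else if a = 1 then -(2 * m (x 0) / (x 1)^3)
     else if a = 2 then 0 else 0)
  else if k = 1 ∧ i = 2 ∧ j = 2 then
    (if a = 0 then 2 * deriv m (x 0) else if a = 1 then -1 else if a = 2 then 0 else 0)
  else if k = 1 ∧ i = 3 ∧ j = 3 then
    (if a = 0 then 2 * deriv m (x 0) * Real.sin (x 2)^2 else if a = 1 then -(Real.sin (x 2)^2)
     else if a = 2 then 2 * (2 * m (x 0) - x 1) * Real.sin (x 2) * Real.cos (x 2) else 0)
  else if k = 2 ∧ ((i = 1 ∧ j = 2) ∨ (i = 2 ∧ j = 1)) then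
    (if a = 0 then 0 else if a = 1 then -(1 / (x 1)^2) else if a = 2 then 0 else 0)
  else if k = 2 ∧ i = 3 ∧ j = 3 then
    (if a = 0 then 0 else if a = 1 then 0
     else if a = 2 then Real.sin (x 2)^2 - Real.cos (x 2)^2 else 0)
  else if k = 3 ∧ ((i = 1 ∧ j = 3) ∨ (i = 3 ∧ j = 1)) then
    (if a = 0 then 0 else if a = 1 then -(1 / (x 1)^2) else if a = 2 then 0 else 0)
  else if k = 3 ∧ ((i = 2 ∧ j = 3) ∨ (i = 3 ∧ j = 2)) then
    (if a = 0 then 0 else if a = 1 then 0 else if a = 2 then -(1 / Real.sin (x 2)^2) else 0)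
  else 0

set_option maxHeartbeats 2000000 in
lemma pd_chrF (hm : ContDiff ℝ (⊤ : ℕ∞) m) (hx : x 1 ≠ 0) (hs : Real.sin (x 2) ≠ 0)
    (a k i j : Fin 4) :
    pd a (fun y => chrF m y k i j) x = dchrF m x a k i j := by
  fin_cases k <;> fin_cases i <;> fin_cases j <;>
    simp [chrF, dchrF, pd_c000 hm hx, pd_c022, pd_c033, pd_c100 hm hx, pd_c101 hm hx,
      pd_c122 hm, pd_c133 hm, pd_c212 hx, pd_c233, pd_c323 hs, pd_const]

lemma chr_eventually (hm : ContDiff ℝ (⊤ : ℕ∞) m) (hr : 0 < x 1) (hθ1 : 0 < x 2) (hθ2 : x 2 < π)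
    (k i j : Fin 4) :
    (fun y => Chr m y k i j) =ᶠ[nhds x] (fun y => chrF m y k i j) := by
  have h1 : ∀ᶠ y : Fin 4 → ℝ in nhds x, y 1 ≠ 0 :=
    ((continuous_apply 1).continuousAt).eventually_ne hr.ne'
  have h2 : ∀ᶠ y : Fin 4 → ℝ in nhds x, Real.sin (y 2) ≠ 0 :=
    ((Real.continuous_sin.comp (continuous_apply 2)).continuousAt).eventually_ne
      (Real.sin_pos_of_pos_of_lt_pi hθ1 hθ2).ne'
  exact (h1.and h2).mono fun y hy => chr_eq hm hy.1 hy.2 k i j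

lemma pd_Chr (hm : ContDiff ℝ (⊤ : ℕ∞) m) (hr : 0 < x 1) (hθ1 : 0 < x 2) (hθ2 : x 2 < π)
    (a k i j : Fin 4) :
    pd a (fun y => Chr m y k i j) x = dchrF m x a k i j := by
  have he := chr_eventually hm hr hθ1 hθ2 k i j
  have h : pd a (fun y => Chr m y k i j) x = pd a (fun y => chrF m y k i j) x := by
    unfold pd; rw [he.fderiv_eq]
  rw [h, pd_chrF hm hr.ne' (Real.sin_pos_of_pos_of_lt_pi hθ1 hθ2).ne' a k i j]

set_option maxHeartbeats 4000000 in
lemma Ric_eq (hm : ContDiff ℝ (⊤ : ℕ∞) m) (hr : 0 < x 1) (hθ1 : 0 < x 2) (hθ2 : x 2 < π)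
    (i j : Fin 4) :
    Ric m x i j = if i = 0 ∧ j = 0 then -(2 * deriv m (x 0) / (x 1)^2) else 0 := by
  have hx : x 1 ≠ 0 := hr.ne'
  have hs : Real.sin (x 2) ≠ 0 := (Real.sin_pos_of_pos_of_lt_pi hθ1 hθ2).ne'
  unfold Ric
  simp only [Fin.sum_univ_four, pd_Chr hm hr hθ1 hθ2, chr_eq hm hx hs]
  fin_cases i <;> fin_cases j <;>
    simp [dchrF, chrF]
  all_goals try field_simp
  all_goals try ring
  all_goals (simp only [Real.cos_sq']; ring)


def RT (m : ℝ → ℝ) (x : Fin 4 → ℝ) (a b c : Fin 4) : ℝ :=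
  if a = 0 ∧ b = 0 ∧ c = 1 then -(2 * m (x 0) / (x 1)^3)
  else if a = 0 ∧ b = 1 ∧ c = 0 then 2 * m (x 0) / (x 1)^3
  else if a = 2 ∧ b = 0 ∧ c = 2 then -(m (x 0) / x 1)
  else if a = 2 ∧ b = 2 ∧ c = 0 then m (x 0) / x 1
  else if a = 3 ∧ b = 0 ∧ c = 3 then -(m (x 0) * Real.sin (x 2)^2 / x 1)
  else if a = 3 ∧ b = 3 ∧ c = 0 then m (x 0) * Real.sin (x 2)^2 / x 1
  else 0

set_option maxHeartbeats 8000000 in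
lemma Riem1 (hm : ContDiff ℝ (⊤ : ℕ∞) m) (hr : 0 < x 1) (hθ1 : 0 < x 2) (hθ2 : x 2 < π)
    (a b c : Fin 4) :
    Riem m x 1 a b c = RT m x a b c := by
  have hx : x 1 ≠ 0 := hr.ne'
  have hs : Real.sin (x 2) ≠ 0 := (Real.sin_pos_of_pos_of_lt_pi hθ1 hθ2).ne'
  unfold Riem
  simp only [Fin.sum_univ_four, pd_Chr hm hr hθ1 hθ2, chr_eq hm hx hs]
  fin_cases a <;> fin_cases b <;> fin_cases c <;>
    simp [gV, chrF, dchrF, RT]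
  all_goals try field_simp
  all_goals try ring
  all_goals try (simp only [Real.cos_sq']; ring)
  all_goals simp


set_option maxHeartbeats 8000000 in
theorem vaidya_ricci_riemann_compatible (m : ℝ → ℝ) (hm : ContDiff ℝ (⊤ : ℕ∞) m)
    (x : Fin 4 → ℝ) (hr : 0 < x 1) (hθ1 : 0 < x 2) (hθ2 : x 2 < π) :
    ∀ a i j k : Fin 4,
      ∑ p, ((∑ q, gVinv m x p q * Ric m x q i) * Riem m x p a j k +
        (∑ q, gVinv m x p q * Ric m x q j) * Riem m x p a k i +
        (∑ q, gVinv m x p q * Ric m x q k) * Riem m x p a i j) = 0 := by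
  intro a i j k
  have collapse : ∀ p w : Fin 4, (∑ q, gVinv m x p q * Ric m x q w)
      = if p = 1 ∧ w = 0 then 2 * deriv m (x 0) / (x 1)^2 else 0 := by
    intro p w
    simp only [Fin.sum_univ_four, Ric_eq hm hr hθ1 hθ2]
    fin_cases p <;> fin_cases w <;> simp [gVinv] <;> ring
  simp only [Fin.sum_univ_four, collapse, Riem1 hm hr hθ1 hθ2]
  fin_cases i <;> fin_cases j <;> fin_cases k <;> fin_cases a <;>
    simp [RT]
  all_goals try ring
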